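/- arXiv:quant-ph/0412133 — 5 statements merged into one kernel-verified Lean document; each statement's English description precedes it below -/
import Mathlib

section
/- For a density matrix ρ, if tr(ρ^β) = 2^{c(1-β)} for all β ≥ α (for some fixed α > 0 and constant c), then the operator norm of ρ equals 2^{-c} and the multiplicity of the largest eigenvalue of ρ equals 2^c. -/
open Matrix BigOperators
open scoped ComplexOrder

noncomputable section

variable {n : Type*} [Fintype n] [DecidableEq n]

/-- A density matrix: positive semidefinite with unit trace. -/
def IsDensity (ρ : Matrix n n ℂ) : Prop := ρ.PosSemidef ∧ ρ.trace = 1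

/-- `tr(ρ^α)` via functional calculus (powers of eigenvalues, with `0^α := 0`). -/
noncomputable def trPow (ρ : Matrix n n ℂ) (α : ℝ) : ℝ :=
  if h : ρ.IsHermitian then ∑ i, if h.eigenvalues i = 0 then 0 else (h.eigenvalues i) ^ α else 0

/-- The von Neumann entropy `-tr(ρ log ρ)` (base-2 logarithm). -/
noncomputable def vN (ρ : Matrix n n ℂ) : ℝ :=
  if h : ρ.IsHermitian then -∑ i, (h.eigenvalues i) * Real.logb 2 (h.eigenvalues i) else 0

/-- The Renyi α-entropy, with the von Neumann entropy at α = 1. -/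
noncomputable def renyi (ρ : Matrix n n ℂ) (α : ℝ) : ℝ :=
  if α = 1 then vN ρ else (1 - α)⁻¹ * Real.logb 2 (trPow ρ α)

/-- Largest eigenvalue (operator norm for positive semidefinite matrices). -/
noncomputable def maxEig (A : Matrix n n ℂ) : ℝ :=
  if h : A.IsHermitian then ⨆ i, h.eigenvalues i else 0

/-- An orthogonal projection. -/
def IsProjection (P : Matrix n n ℂ) : Prop := P.IsHermitian ∧ P * P = P

/-- A normalized projection `P / rank P`. -/
def IsNormalizedProjection (ρ : Matrix n n ℂ) : Prop :=
  ∃ P : Matrix n n ℂ, IsProjection P ∧ ρ = ((P.rank : ℂ))⁻¹ • P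

def TracePreserving (T : Matrix n n ℂ → Matrix n n ℂ) : Prop :=
  ∀ X, (T X).trace = X.trace

def PositiveMap (T : Matrix n n ℂ → Matrix n n ℂ) : Prop :=
  ∀ X, X.PosSemidef → (T X).PosSemidef

/-- The ampliation `T ⊗ id` acting blockwise. -/
def ampl (T : Matrix n n ℂ → Matrix n n ℂ) {k : Type*} [Fintype k] [DecidableEq k]
    (X : Matrix (n × k) (n × k) ℂ) : Matrix (n × k) (n × k) ℂ :=
  fun p q => T (fun a b => X (a, p.2) (b, q.2)) p.1 q.1

def CompletelyPositive (T : Matrix n n ℂ → Matrix n n ℂ) : Prop :=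
  ∀ (N : ℕ) (X : Matrix (n × Fin N) (n × Fin N) ℂ), X.PosSemidef → (ampl T X).PosSemidef

def IsChannel (T : Matrix n n ℂ → Matrix n n ℂ) : Prop :=
  IsLinearMap ℂ T ∧ CompletelyPositive T ∧ TracePreserving T

/-- Minimal output Renyi α-entropy. -/
noncomputable def minOut (T : Matrix n n ℂ → Matrix n n ℂ) (α : ℝ) : ℝ :=
  sInf {x | ∃ ρ, IsDensity ρ ∧ x = renyi (T ρ) α}

/-- Maximal output von Neumann entropy. -/
noncomputable def maxVN (T : Matrix n n ℂ → Matrix n n ℂ) : ℝ :=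
  sSup {x | ∃ ρ, IsDensity ρ ∧ x = vN (T ρ)}

/-- Holevo capacity. -/
noncomputable def holevoCap (T : Matrix n n ℂ → Matrix n n ℂ) : ℝ :=
  sSup {x | ∃ (k : ℕ) (p : Fin k → ℝ) (σ : Fin k → Matrix n n ℂ),
    (∀ i, 0 ≤ p i) ∧ (∑ i, p i = 1) ∧ (∀ i, IsDensity (σ i)) ∧
    x = vN (T (∑ i, (p i : ℂ) • σ i)) - ∑ i, p i * vN (T (σ i))}

/-- Tensor product of matrices indexed by a finite family. -/
def tensorMatrix {N : ℕ} {d : Fin N → Type*} [∀ i, Fintype (d i)] [∀ i, DecidableEq (d i)]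
    (A : ∀ i, Matrix (d i) (d i) ℂ) : Matrix (∀ i, d i) (∀ i, d i) ℂ :=
  fun p q => ∏ i, A i (p i) (q i)

/-- The flip (swap) operator on `ℂ^n ⊗ ℂ^n`. -/
def flipMat : Matrix (n × n) (n × n) ℂ :=
  fun p q => if p.1 = q.2 ∧ p.2 = q.1 then 1 else 0

/-- Partial transpose on the second tensor factor. -/
def pt2 {a b : Type*} (X : Matrix (a × b) (a × b) ℂ) : Matrix (a × b) (a × b) ℂ :=
  fun p q => X (p.1, q.2) (q.1, p.2)

end

/-- if `tr(ρ^β) = 2^{c(1-β)}` for all `β ≥ α` then `‖ρ‖_∞ = 2^{-c}` and the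
largest eigenvalue has multiplicity `2^c`. -/
theorem trPow_eq_implies_multiplicity {d : ℕ} (hd : 0 < d)
    (ρ : Matrix (Fin d) (Fin d) ℂ) (hρ : IsDensity ρ) (c α : ℝ) (hα : 0 < α)
    (h : ∀ β : ℝ, α ≤ β → trPow ρ β = (2 : ℝ) ^ (c * (1 - β))) :
    (⨆ i, hρ.1.1.eigenvalues i) = (2 : ℝ) ^ (-c) ∧
    ((Finset.univ.filter
        (fun i => hρ.1.1.eigenvalues i = ⨆ j, hρ.1.1.eigenvalues j)).card : ℝ)
      = (2 : ℝ) ^ c := by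
  have hH : ρ.IsHermitian := hρ.1.1
  set ev : Fin d → ℝ := hρ.1.1.eigenvalues with hev
  have hnn : ∀ i, 0 ≤ ev i := fun i => hρ.1.eigenvalues_nonneg i
  set m : ℝ := (2:ℝ) ^ (-c) with hm
  have hm0 : 0 < m := Real.rpow_pos_of_pos (by norm_num) _
  set S : Finset (Fin d) := Finset.univ.filter (fun i => ev i ≠ 0) with hS
  have hF : ∀ β : ℝ, α ≤ β → ∑ i ∈ S, (ev i) ^ β = (2:ℝ)^c * m ^ β := by
    intro β hβ
    have h1 := h β hβ
    rw [trPow, dif_pos hH] at h1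
    have h2 : ∑ i ∈ S, (ev i) ^ β
        = ∑ i : Fin d, if ev i = 0 then 0 else (ev i) ^ β := by
      rw [hS, Finset.sum_filter]
      exact Finset.sum_congr rfl fun i _ => (ite_not (ev i = 0) ((ev i)^β) 0)
    have h3 : c * (1 - β) = c + (-c) * β := by ring
    rw [h2, h1, h3, Real.rpow_add (by norm_num : (0:ℝ) < 2),
      Real.rpow_mul (by norm_num : (0:ℝ) ≤ 2)]
  have hSne : S.Nonempty := by
    by_contra hempty
    rw [Finset.not_nonempty_iff_eq_empty] at hempty
    have := hF α le_rfl
    rw [hempty, Finset.sum_empty] at this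
    have : (0:ℝ) < 2^c * m^α :=
      mul_pos (Real.rpow_pos_of_pos (by norm_num) _) (Real.rpow_pos_of_pos hm0 _)
    linarith [this, hF α le_rfl, (Finset.sum_empty (f := fun i => (ev i)^α))]
  have hposS : ∀ i ∈ S, 0 < ev i := by
    intro i hi
    rw [hS, Finset.mem_filter] at hi
    exact (hnn i).lt_of_ne (Ne.symm hi.2)
  -- key: every eigenvalue in the support equals m
  have key : ∀ i ∈ S, ev i = m := by
    have e0 := hF α le_rfl
    have e1 := hF (α+1) (by linarith)
    have e2 := hF (α+2) (by linarith)
    have expand : ∀ i ∈ S, (ev i)^α * (m - ev i)^2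
        = m^2 * (ev i)^α + (ev i)^(α+2) - 2*m*(ev i)^(α+1) := by
      intro i hi
      have hp := hposS i hi
      have r1 : (ev i)^(α+1) = (ev i)^α * ev i := by
        rw [Real.rpow_add hp, Real.rpow_one]
      have r2 : (ev i)^(α+2) = (ev i)^α * (ev i * ev i) := by
        have : (α:ℝ)+2 = α+1+1 := by ring
        rw [this, Real.rpow_add hp, Real.rpow_one, r1]; ring
      rw [r1, r2]; ring
    have hsum : ∑ i ∈ S, (ev i)^α * (m - ev i)^2 = 0 := by
      rw [Finset.sum_congr rfl expand]
      have hsplit : ∑ i ∈ S, (m^2 * (ev i)^α + (ev i)^(α+2) - 2*m*(ev i)^(α+1))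
          = m^2 * (∑ i ∈ S, (ev i)^α) + (∑ i ∈ S, (ev i)^(α+2))
            - 2*m*(∑ i ∈ S, (ev i)^(α+1)) := by
        rw [Finset.sum_sub_distrib, Finset.sum_add_distrib, Finset.mul_sum,
          Finset.mul_sum]
      rw [hsplit, e0, e1, e2]
      have rm1 : m^(α+1) = m^α * m := by rw [Real.rpow_add hm0, Real.rpow_one]
      have rm2 : m^(α+2) = m^α * (m * m) := by
        have : (α:ℝ)+2 = α+1+1 := by ring
        rw [this, Real.rpow_add hm0, Real.rpow_one, rm1]; ring
      rw [rm1, rm2]; ring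
    have hnn' : ∀ i ∈ S, 0 ≤ (ev i)^α * (m - ev i)^2 := fun i hi =>
      mul_nonneg (Real.rpow_nonneg (hnn i) _) (sq_nonneg _)
    have hz := (Finset.sum_eq_zero_iff_of_nonneg hnn').mp hsum
    intro i hi
    have := hz i hi
    have hpa : (0:ℝ) < (ev i)^α := Real.rpow_pos_of_pos (hposS i hi) _
    have : (m - ev i)^2 = 0 := by
      by_contra hc
      exact hc (by
        have := mul_eq_zero.mp this
        rcases this with h' | h'
        · exact absurd h' (ne_of_gt hpa)
        · exact h')
    have := pow_eq_zero_iff (n := 2) (by norm_num) |>.mp this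
    linarith
  have hle : ∀ i, ev i ≤ m := by
    intro i
    by_cases hi : ev i = 0
    · rw [hi]; exact le_of_lt hm0
    · exact le_of_eq (key i (by rw [hS]; simp [hi]))
  obtain ⟨i₀, hi₀⟩ := hSne
  haveI : Nonempty (Fin d) := ⟨⟨0, hd⟩⟩
  have hsup : (⨆ i, ev i) = m := by
    apply le_antisymm
    · exact ciSup_le hle
    · calc m = ev i₀ := (key i₀ hi₀).symm
        _ ≤ ⨆ i, ev i := le_ciSup (Set.Finite.bddAbove (Set.finite_range ev)) i₀
  refine ⟨hsup, ?_⟩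
  have hfilter : Finset.univ.filter (fun i => ev i = ⨆ j, ev j) = S := by
    ext i
    simp only [Finset.mem_filter, Finset.mem_univ, true_and, hS, hsup]
    constructor
    · intro hi; rw [hi]; exact ne_of_gt hm0
    · intro hi; exact key i (by rw [hS]; simp [hi])
  rw [hfilter]
  -- count from the β = α identity
  have e0 := hF α le_rfl
  have hconst : ∑ i ∈ S, (ev i)^α = (S.card : ℝ) * m^α := by
    rw [Finset.sum_congr rfl (fun i hi => by rw [key i hi]),
      Finset.sum_const, nsmul_eq_mul]
  rw [hconst] at e0
  have hma : (0:ℝ) < m^α := Real.rpow_pos_of_pos hm0 _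
  exact mul_right_cancel₀ (ne_of_gt hma) e0
end

section
/- Let T be a quantum channel such that ν_α(T) = ν_β(T) for some α > β ≥ 0, where ν_γ(T) = inf_ρ S_γ(T(ρ)) is the minimal output γ-entropy. If ν_α(T^{⊗N}) = N·ν_α(T) for all N, then ν_β(T^{⊗N}) = N·ν_β(T) for all N. -/
open Matrix BigOperators
open scoped ComplexOrder

/-!
Rényi entropies of a state decrease in the order, so
`ν_β(T^⊗N) ≥ ν_α(T^⊗N) = N ν_α(T) = N ν_β(T)`. Conversely, Rényi entropies are additive on product
states, so feeding `ρ^⊗N` into `T^⊗N` gives `ν_β(T^⊗N) ≤ N ν_β(T)`.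

Monotonicity in the order: for weights `p` with `∑ p = 1`, `F γ = log ∑ p_i ^ γ` is convex (Hölder)
with `F 1 = 0`, and the entropy of order `γ ≠ 1` is minus the slope of `F` between `1` and `γ`.
The Shannon entropy fits between the slopes on either side of `1` because `F` lies above its
tangent `(γ - 1) ∑ p_i log p_i` at `1` (Jensen).
-/

open Real Finset
open scoped Pointwise

section Weights

variable {ι : Type*} {s : Finset ι} {p : ι → ℝ}

theorem convexOn_log_sum_rpow (hp : ∀ i ∈ s, 0 < p i) (hs : s.Nonempty) :
    ConvexOn ℝ Set.univ fun γ : ℝ => log (∑ i ∈ s, p i ^ γ) := by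
  refine convexOn_iff_forall_pos.2 ⟨convex_univ, fun x _ y _ a b ha hb hab => ?_⟩
  have hpos : ∀ γ : ℝ, 0 < ∑ i ∈ s, p i ^ γ := fun γ =>
    sum_pos (fun i hi => rpow_pos_of_pos (hp i hi) γ) hs
  have holder : ∑ i ∈ s, p i ^ (a * x + b * y)
      ≤ (∑ i ∈ s, p i ^ x) ^ a * (∑ i ∈ s, p i ^ y) ^ b := by
    have h := inner_le_Lp_mul_Lq_of_nonneg s (holderConjugate_one_div ha hb hab)
      (f := fun i => p i ^ (a * x)) (g := fun i => p i ^ (b * y))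
      (fun i hi => (rpow_pos_of_pos (hp i hi) _).le) (fun i hi => (rpow_pos_of_pos (hp i hi) _).le)
    have hpow : ∀ c z : ℝ, c ≠ 0 → ∀ i ∈ s, (p i ^ (c * z)) ^ (1 / c) = p i ^ z :=
      fun c z hc i hi => by rw [← rpow_mul (hp i hi).le]; field_simp
    simp only [one_div_one_div] at h
    rwa [sum_congr rfl fun i hi => (rpow_add (hp i hi) _ _).symm, sum_congr rfl (hpow a x ha.ne'),
      sum_congr rfl (hpow b y hb.ne')] at h
  calc log (∑ i ∈ s, p i ^ (a • x + b • y))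
      ≤ log ((∑ i ∈ s, p i ^ x) ^ a * (∑ i ∈ s, p i ^ y) ^ b) := log_le_log (hpos _) holder
    _ = a • log (∑ i ∈ s, p i ^ x) + b • log (∑ i ∈ s, p i ^ y) := by
      rw [log_mul (rpow_pos_of_pos (hpos x) a).ne' (rpow_pos_of_pos (hpos y) b).ne',
        log_rpow (hpos x), log_rpow (hpos y), smul_eq_mul, smul_eq_mul]

theorem mul_sum_mul_log_le_log_sum_rpow (hp : ∀ i ∈ s, 0 < p i) (hp1 : ∑ i ∈ s, p i = 1)
    (γ : ℝ) : (γ - 1) * ∑ i ∈ s, p i * log (p i) ≤ log (∑ i ∈ s, p i ^ γ) := by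
  have jensen := strictConcaveOn_log_Ioi.concaveOn.le_map_sum (t := s) (w := p)
    (p := fun i => p i ^ (γ - 1)) (fun i hi => (hp i hi).le) hp1
    (fun i hi => rpow_pos_of_pos (hp i hi) _)
  calc (γ - 1) * ∑ i ∈ s, p i * log (p i) = ∑ i ∈ s, p i • log (p i ^ (γ - 1)) := by
        rw [mul_sum]
        refine sum_congr rfl fun i hi => ?_
        rw [smul_eq_mul, log_rpow (hp i hi)]
        ring
    _ ≤ log (∑ i ∈ s, p i • p i ^ (γ - 1)) := jensen
    _ = log (∑ i ∈ s, p i ^ γ) := by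
        congr 1
        refine sum_congr rfl fun i hi => ?_
        rw [smul_eq_mul, rpow_sub_one (hp i hi).ne', mul_div_cancel₀ _ (hp i hi).ne']

noncomputable def renyiOfWeights (s : Finset ι) (p : ι → ℝ) (γ : ℝ) : ℝ :=
  if γ = 1 then -∑ i ∈ s, p i * log (p i) else log (∑ i ∈ s, p i ^ γ) / (1 - γ)

theorem renyiOfWeights_eq_neg_slope (hp1 : ∑ i ∈ s, p i = 1) :
    renyiOfWeights s p = fun γ => -(if γ = 1 then ∑ i ∈ s, p i * log (p i)
      else slope (fun γ : ℝ => log (∑ i ∈ s, p i ^ γ)) 1 γ) := by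
  ext γ
  unfold renyiOfWeights
  split_ifs with hγ
  · rfl
  · have : γ - 1 ≠ 0 := sub_ne_zero.2 hγ
    simp only [slope_def_field, rpow_one, hp1, log_one, sub_zero]
    field_simp
    ring

theorem renyiOfWeights_antitone (hp : ∀ i ∈ s, 0 < p i) (hp1 : ∑ i ∈ s, p i = 1) :
    Antitone (renyiOfWeights s p) := by
  rw [renyiOfWeights_eq_neg_slope hp1]
  refine Monotone.neg fun a b hab => ?_
  set F := fun γ : ℝ => log (∑ i ∈ s, p i ^ γ)
  have hs : s.Nonempty := nonempty_of_sum_ne_zero (by rw [hp1]; exact one_ne_zero)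
  have tangent := mul_sum_mul_log_le_log_sum_rpow hp hp1
  have hF1 : F 1 = 0 := by simp [F, hp1]
  have below : ∀ γ < 1, slope F 1 γ ≤ ∑ i ∈ s, p i * log (p i) := fun γ hγ => by
    rw [slope_def_field, hF1, sub_zero, div_le_iff_of_neg (sub_neg.2 hγ), mul_comm]
    exact tangent γ
  have above : ∀ γ > 1, ∑ i ∈ s, p i * log (p i) ≤ slope F 1 γ := fun γ hγ => by
    rw [slope_def_field, hF1, sub_zero, le_div_iff₀ (sub_pos.2 hγ), mul_comm]
    exact tangent γ
  rcases hab.eq_or_lt with rfl | hab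
  · rfl
  by_cases ha : a = 1 <;> by_cases hb : b = 1 <;> simp only [ha, hb, if_true, if_false]
  · exact (hab.ne (ha.trans hb.symm)).elim
  · exact above b (ha ▸ hab)
  · exact below a (hb ▸ hab)
  · exact (convexOn_log_sum_rpow hp hs).slope_mono (Set.mem_univ 1) ⟨trivial, ha⟩ ⟨trivial, hb⟩
      hab.le

theorem renyiOfWeights_nonneg (hp : ∀ i ∈ s, 0 < p i) (hp1 : ∑ i ∈ s, p i = 1) (γ : ℝ) :
    0 ≤ renyiOfWeights s p γ := by
  have hle : ∀ i ∈ s, p i ≤ 1 := fun i hi =>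
    hp1 ▸ single_le_sum (fun j hj => (hp j hj).le) hi
  unfold renyiOfWeights
  split_ifs with hγ
  · exact neg_nonneg.2 <| sum_nonpos fun i hi =>
      mul_nonpos_of_nonneg_of_nonpos (hp i hi).le (log_nonpos (hp i hi).le (hle i hi))
  rcases lt_or_gt_of_ne hγ with hγ | hγ
  · refine div_nonneg (log_nonneg ?_) (sub_pos.2 hγ).le
    calc 1 = ∑ i ∈ s, p i := hp1.symm
      _ ≤ ∑ i ∈ s, p i ^ γ := sum_le_sum fun i hi => by
        simpa using rpow_le_rpow_of_exponent_ge (hp i hi) (hle i hi) hγ.le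
  · have hpos : 0 ≤ ∑ i ∈ s, p i ^ γ := sum_nonneg fun i hi => (rpow_pos_of_pos (hp i hi) γ).le
    refine div_nonneg_of_nonpos (log_nonpos hpos ?_) (sub_neg.2 hγ).le
    calc ∑ i ∈ s, p i ^ γ ≤ ∑ i ∈ s, p i := sum_le_sum fun i hi => by
          simpa using rpow_le_rpow_of_exponent_ge (hp i hi) (hle i hi) hγ.le
      _ = 1 := hp1

end Weights

theorem ite_prod_rpow {ι : Type*} (s : Finset ι) {f : ι → ℝ} (hf : ∀ i ∈ s, 0 ≤ f i) (γ : ℝ) :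
    (if (∏ i ∈ s, f i) = 0 then 0 else (∏ i ∈ s, f i) ^ γ)
      = ∏ i ∈ s, if f i = 0 then 0 else f i ^ γ := by
  by_cases h : ∃ i ∈ s, f i = 0
  · obtain ⟨i, hi, h0⟩ := h
    rw [if_pos (Finset.prod_eq_zero hi h0)]
    exact (Finset.prod_eq_zero hi (by rw [if_pos h0])).symm
  · push Not at h
    rw [if_neg (prod_ne_zero_iff.2 h), ← finsetProd_rpow s f hf,
      prod_congr rfl fun i hi => if_neg (h i hi)]

theorem sum_prod_mul_logb_prod {ι : Type*} [Fintype ι] [DecidableEq ι] {κ : ι → Type*}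
    [∀ i, Fintype (κ i)] (p : ∀ i, κ i → ℝ) (hp : ∀ i, ∑ k, p i k = 1) (b : ℝ) :
    ∑ x : ∀ i, κ i, (∏ i, p i (x i)) * logb b (∏ i, p i (x i))
      = ∑ i, ∑ k, p i k * logb b (p i k) := by
  have hsplit : ∀ x : ∀ i, κ i, (∏ i, p i (x i)) * logb b (∏ i, p i (x i))
      = ∑ i, (∏ j, p j (x j)) * logb b (p i (x i)) := by
    intro x
    by_cases h : ∃ i, p i (x i) = 0
    · obtain ⟨i, hi⟩ := h
      simp [Finset.prod_eq_zero (f := fun j => p j (x j)) (mem_univ i) hi]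
    · push Not at h
      rw [logb_prod _ _ fun i _ => h i, mul_sum]
  have marginal : ∀ i, ∑ x : ∀ i, κ i, (∏ j, p j (x j)) * logb b (p i (x i))
      = ∑ k, p i k * logb b (p i k) := by
    intro i
    calc _ = ∑ x : ∀ i, κ i, ∏ j, p j (x j) * (if j = i then logb b (p j (x j)) else 1) := by
          refine sum_congr rfl fun x _ => ?_
          rw [prod_mul_distrib, Fintype.prod_ite_eq']
      _ = ∏ j, ∑ k, p j k * (if j = i then logb b (p j k) else 1) :=
          (Fintype.prod_sum fun j k => p j k * (if j = i then logb b (p j k) else 1)).symm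
      _ = ∑ k, p i k * logb b (p i k) := by
          rw [Fintype.prod_eq_single i fun j hj => by simp [hj, hp j]]
          simp
  rw [sum_congr rfl fun x _ => hsplit x, sum_comm]
  exact sum_congr rfl fun i _ => marginal i

namespace Matrix

variable {n : Type*} [Fintype n] [DecidableEq n]

theorem IsHermitian.map_eigenvalues_eq {A U : Matrix n n ℂ} (hA : A.IsHermitian) (hU : Uᴴ * U = 1)
    {μ : n → ℝ} (hAμ : A = U * diagonal (fun i => (μ i : ℂ)) * Uᴴ) :
    univ.val.map hA.eigenvalues = univ.val.map μ := by
  have hchar : A.charpoly = ∏ i, (Polynomial.X - Polynomial.C (μ i : ℂ)) := by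
    rw [hAμ, charpoly_mul_comm, ← mul_assoc, hU, one_mul, charpoly_diagonal]
  have hroots := hA.roots_charpoly_eq_eigenvalues
  rw [hchar, Polynomial.roots_prod _ _
    (prod_ne_zero_iff.2 fun i _ => Polynomial.X_sub_C_ne_zero _)] at hroots
  simpa [Multiset.map_map, Function.comp_def] using (congrArg (Multiset.map RCLike.re) hroots).symm

theorem IsHermitian.sum_comp_eigenvalues_eq {A U : Matrix n n ℂ} (hA : A.IsHermitian)
    (hU : Uᴴ * U = 1) {μ : n → ℝ} (hAμ : A = U * diagonal (fun i => (μ i : ℂ)) * Uᴴ)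
    (g : ℝ → ℝ) : ∑ i, g (hA.eigenvalues i) = ∑ i, g (μ i) := by
  have h := congrArg (fun m => (m.map g).sum) (hA.map_eigenvalues_eq hU hAμ)
  simp only [Multiset.map_map] at h
  rw [sum_eq_multiset_sum, sum_eq_multiset_sum]
  exact h

end Matrix

section TensorMatrix

variable {N : ℕ} {d : Fin N → Type*} [∀ i, Fintype (d i)] [∀ i, DecidableEq (d i)]

theorem tensorMatrix_mul (A B : ∀ i, Matrix (d i) (d i) ℂ) :
    tensorMatrix A * tensorMatrix B = tensorMatrix fun i => A i * B i := by
  ext x y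
  simp only [Matrix.mul_apply, tensorMatrix, ← prod_mul_distrib, Fintype.prod_sum]

theorem conjTranspose_tensorMatrix (A : ∀ i, Matrix (d i) (d i) ℂ) :
    (tensorMatrix A)ᴴ = tensorMatrix fun i => (A i)ᴴ := by
  ext x y
  simp [tensorMatrix]

theorem tensorMatrix_diagonal (v : ∀ i, d i → ℂ) :
    tensorMatrix (fun i => Matrix.diagonal (v i)) = Matrix.diagonal fun x => ∏ i, v i (x i) := by
  ext x y
  by_cases h : x = y
  · simp [h, tensorMatrix]
  · obtain ⟨i, hi⟩ := Function.ne_iff.mp h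
    rw [Matrix.diagonal_apply_ne _ h]
    exact prod_eq_zero (mem_univ i) (Matrix.diagonal_apply_ne _ hi)

theorem tensorMatrix_one : tensorMatrix (fun i => (1 : Matrix (d i) (d i) ℂ)) = 1 := by
  simpa using tensorMatrix_diagonal (d := d) fun _ _ => 1

theorem trace_tensorMatrix (A : ∀ i, Matrix (d i) (d i) ℂ) :
    (tensorMatrix A).trace = ∏ i, (A i).trace := by
  simp only [Matrix.trace, Matrix.diag, tensorMatrix, Fintype.prod_sum]

theorem Matrix.IsHermitian.tensorMatrix {A : ∀ i, Matrix (d i) (d i) ℂ}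
    (hA : ∀ i, (A i).IsHermitian) : (tensorMatrix A).IsHermitian := by
  simp only [Matrix.IsHermitian, conjTranspose_tensorMatrix, fun i => (hA i).eq]

theorem tensorMatrix_eq_conj_diagonal {A : ∀ i, Matrix (d i) (d i) ℂ}
    (hA : ∀ i, (A i).IsHermitian) :
    let U := tensorMatrix fun i => ((hA i).eigenvectorUnitary : Matrix (d i) (d i) ℂ)
    Uᴴ * U = 1 ∧ tensorMatrix A =
      U * Matrix.diagonal (fun x => ((∏ i, (hA i).eigenvalues (x i) : ℝ) : ℂ)) * Uᴴ := by
  refine ⟨?_, ?_⟩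
  · rw [conjTranspose_tensorMatrix, tensorMatrix_mul]
    simp only [← Matrix.star_eq_conjTranspose, Unitary.coe_star_mul_self, tensorMatrix_one]
  · have hdiag : Matrix.diagonal (fun x => ((∏ i, (hA i).eigenvalues (x i) : ℝ) : ℂ))
        = tensorMatrix fun i => Matrix.diagonal fun k => ((hA i).eigenvalues k : ℂ) := by
      rw [tensorMatrix_diagonal]
      push_cast
      rfl
    rw [hdiag, conjTranspose_tensorMatrix, tensorMatrix_mul, tensorMatrix_mul]
    congr 1
    funext i
    conv_lhs => rw [(hA i).spectral_theorem, Unitary.conjStarAlgAut_apply]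
    rfl

end TensorMatrix

namespace Matrix.IsHermitian

variable {n : Type*} [Fintype n] [DecidableEq n] {σ : Matrix n n ℂ}

noncomputable def eigenvalueSupport (hσ : σ.IsHermitian) : Finset n :=
  univ.filter fun i => hσ.eigenvalues i ≠ 0

theorem trPow_eq_sum_eigenvalueSupport (hσ : σ.IsHermitian) (γ : ℝ) :
    trPow σ γ = ∑ i ∈ hσ.eigenvalueSupport, hσ.eigenvalues i ^ γ := by
  rw [trPow, dif_pos hσ, eigenvalueSupport, sum_filter]
  exact sum_congr rfl fun i _ => by split_ifs <;> simp_all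

theorem renyi_eq_renyiOfWeights (hσ : σ.IsHermitian) (γ : ℝ) :
    renyi σ γ = renyiOfWeights hσ.eigenvalueSupport hσ.eigenvalues γ / log 2 := by
  unfold renyi renyiOfWeights
  split_ifs with hγ
  · rw [vN, dif_pos hσ, eigenvalueSupport, sum_filter_of_ne fun i _ h => left_ne_zero_of_mul h]
    simp only [logb, neg_div, sum_div, mul_div_assoc]
  · rw [hσ.trPow_eq_sum_eigenvalueSupport, logb]
    ring

end Matrix.IsHermitian

namespace IsDensity

variable {n : Type*} [Fintype n] [DecidableEq n] {ρ : Matrix n n ℂ}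

theorem sum_eigenvalues (hρ : IsDensity ρ) : ∑ i, hρ.1.1.eigenvalues i = 1 := by
  have h : ((∑ i, hρ.1.1.eigenvalues i : ℝ) : ℂ) = 1 := by
    push_cast
    exact hρ.1.1.trace_eq_sum_eigenvalues.symm.trans hρ.2
  exact_mod_cast h

theorem eigenvalues_pos (hρ : IsDensity ρ) :
    ∀ i ∈ hρ.1.1.eigenvalueSupport, 0 < hρ.1.1.eigenvalues i := fun i hi =>
  (hρ.1.eigenvalues_nonneg i).lt_of_ne (mem_filter.1 hi).2.symm

theorem sum_eigenvalueSupport (hρ : IsDensity ρ) :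
    ∑ i ∈ hρ.1.1.eigenvalueSupport, hρ.1.1.eigenvalues i = 1 := by
  rw [Matrix.IsHermitian.eigenvalueSupport, sum_filter_ne_zero, hρ.sum_eigenvalues]

theorem renyi_antitone (hρ : IsDensity ρ) : Antitone (renyi ρ) := fun a b hab => by
  simp only [hρ.1.1.renyi_eq_renyiOfWeights]
  exact div_le_div_of_nonneg_right
    (renyiOfWeights_antitone hρ.eigenvalues_pos hρ.sum_eigenvalueSupport hab)
    (log_pos one_lt_two).le

theorem renyi_nonneg (hρ : IsDensity ρ) (γ : ℝ) : 0 ≤ renyi ρ γ := by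
  rw [hρ.1.1.renyi_eq_renyiOfWeights]
  exact div_nonneg (renyiOfWeights_nonneg hρ.eigenvalues_pos hρ.sum_eigenvalueSupport γ)
    (log_pos one_lt_two).le

theorem trPow_pos (hρ : IsDensity ρ) (γ : ℝ) : 0 < trPow ρ γ := by
  rw [hρ.1.1.trPow_eq_sum_eigenvalueSupport]
  refine sum_pos (fun i hi => rpow_pos_of_pos (hρ.eigenvalues_pos i hi) γ) ?_
  exact nonempty_of_sum_ne_zero (by rw [hρ.sum_eigenvalueSupport]; exact one_ne_zero)

end IsDensity

section TensorEntropy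

variable {N : ℕ} {d : Fin N → Type*} [∀ i, Fintype (d i)] [∀ i, DecidableEq (d i)]
  {A : ∀ i, Matrix (d i) (d i) ℂ}

theorem sum_comp_eigenvalues_tensorMatrix (hA : ∀ i, (A i).IsHermitian) (g : ℝ → ℝ) :
    ∑ x, g ((Matrix.IsHermitian.tensorMatrix hA).eigenvalues x)
      = ∑ x : ∀ i, d i, g (∏ i, (hA i).eigenvalues (x i)) :=
  have h := tensorMatrix_eq_conj_diagonal hA
  (Matrix.IsHermitian.tensorMatrix hA).sum_comp_eigenvalues_eq h.1 h.2 g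

theorem Matrix.PosSemidef.tensorMatrix (hA : ∀ i, (A i).PosSemidef) :
    (tensorMatrix A).PosSemidef := by
  obtain ⟨-, hdec⟩ := tensorMatrix_eq_conj_diagonal fun i => (hA i).1
  rw [hdec]
  refine .mul_mul_conjTranspose_same (Matrix.posSemidef_diagonal_iff.2 fun x => ?_) _
  exact_mod_cast prod_nonneg fun i _ => (hA i).eigenvalues_nonneg (x i)

theorem IsDensity.tensorMatrix (hA : ∀ i, IsDensity (A i)) : IsDensity (tensorMatrix A) :=
  ⟨.tensorMatrix fun i => (hA i).1, by simp [trace_tensorMatrix, fun i => (hA i).2]⟩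

theorem trPow_tensorMatrix (hA : ∀ i, (A i).PosSemidef) (γ : ℝ) :
    trPow (tensorMatrix A) γ = ∏ i, trPow (A i) γ := by
  have hH := Matrix.IsHermitian.tensorMatrix fun i => (hA i).1
  simp only [trPow, dif_pos hH, dif_pos (hA _).1]
  rw [sum_comp_eigenvalues_tensorMatrix (fun i => (hA i).1) (fun t => if t = 0 then 0 else t ^ γ),
    Fintype.prod_sum]
  exact sum_congr rfl fun x _ => ite_prod_rpow _ (fun i _ => (hA i).eigenvalues_nonneg _) γ

theorem vN_tensorMatrix (hA : ∀ i, IsDensity (A i)) : vN (tensorMatrix A) = ∑ i, vN (A i) := by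
  have hH := Matrix.IsHermitian.tensorMatrix fun i => (hA i).1.1
  simp only [vN, dif_pos hH, dif_pos (hA _).1.1]
  rw [sum_comp_eigenvalues_tensorMatrix (fun i => (hA i).1.1) (fun t => t * logb 2 t),
    sum_prod_mul_logb_prod _ (fun i => (hA i).sum_eigenvalues), sum_neg_distrib]

theorem renyi_tensorMatrix (hA : ∀ i, IsDensity (A i)) (γ : ℝ) :
    renyi (tensorMatrix A) γ = ∑ i, renyi (A i) γ := by
  unfold renyi
  split_ifs
  · exact vN_tensorMatrix hA
  · rw [trPow_tensorMatrix fun i => (hA i).1, logb_prod _ _ fun i _ => ((hA i).trPow_pos γ).ne',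
      mul_sum]

end TensorEntropy

theorem CompletelyPositive.positiveMap {n : Type*} {T : Matrix n n ℂ → Matrix n n ℂ}
    (hT : CompletelyPositive T) : PositiveMap T :=
  fun X hX => (hT 1 (X.submatrix Prod.fst Prod.fst) (hX.submatrix _)).submatrix fun a => (a, 0)

theorem IsChannel.mapsTo_isDensity {n : Type*} [Fintype n] {T : Matrix n n ℂ → Matrix n n ℂ}
    (hT : IsChannel T) : Set.MapsTo T {ρ | IsDensity ρ} {ρ | IsDensity ρ} :=
  fun ρ hρ => ⟨hT.2.1.positiveMap ρ hρ.1, (hT.2.2 ρ).trans hρ.2⟩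

section MinimalOutputEntropy

variable {n : Type*} [Fintype n] [DecidableEq n] {T : Matrix n n ℂ → Matrix n n ℂ}

theorem exists_isDensity [Nonempty n] : ∃ ρ : Matrix n n ℂ, IsDensity ρ := by
  obtain ⟨i⟩ := ‹Nonempty n›
  refine ⟨Matrix.diagonal (Pi.single i 1), Matrix.posSemidef_diagonal_iff.2 fun j => ?_, by simp⟩
  by_cases h : j = i <;> simp [h]

theorem minOut_of_isEmpty [IsEmpty n] (T : Matrix n n ℂ → Matrix n n ℂ) (γ : ℝ) :
    minOut T γ = 0 := by
  have : ∀ ρ : Matrix n n ℂ, ¬IsDensity ρ := fun ρ hρ => by simpa [Matrix.trace] using hρ.2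
  simp [minOut, this]

theorem minOut_le (hT : Set.MapsTo T {ρ | IsDensity ρ} {ρ | IsDensity ρ}) {ρ : Matrix n n ℂ}
    (hρ : IsDensity ρ) (γ : ℝ) : minOut T γ ≤ renyi (T ρ) γ :=
  csInf_le ⟨0, by rintro _ ⟨σ, hσ, rfl⟩; exact IsDensity.renyi_nonneg (hT hσ) γ⟩ ⟨ρ, hρ, rfl⟩

theorem minOut_antitone (hT : Set.MapsTo T {ρ | IsDensity ρ} {ρ | IsDensity ρ}) :
    Antitone (minOut T) := by
  intro β α hβα
  rcases isEmpty_or_nonempty n with hn | hn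
  · simp [minOut_of_isEmpty]
  obtain ⟨ρ₀, hρ₀⟩ := exists_isDensity (n := n)
  refine le_csInf ⟨_, ρ₀, hρ₀, rfl⟩ ?_
  rintro _ ⟨ρ, hρ, rfl⟩
  exact (minOut_le hT hρ α).trans (IsDensity.renyi_antitone (hT hρ) hβα)

theorem minOut_le_mul_of_tensorMatrix {d : Type*} [Fintype d] [DecidableEq d] {N : ℕ}
    {T : Matrix d d ℂ → Matrix d d ℂ}
    {S : Matrix (Fin N → d) (Fin N → d) ℂ → Matrix (Fin N → d) (Fin N → d) ℂ}
    (hT : Set.MapsTo T {ρ | IsDensity ρ} {ρ | IsDensity ρ})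
    (hS : Set.MapsTo S {ρ | IsDensity ρ} {ρ | IsDensity ρ})
    (hST : ∀ A : Fin N → Matrix d d ℂ,
      S (tensorMatrix (d := fun _ : Fin N => d) A) = tensorMatrix fun i => T (A i))
    (γ : ℝ) : minOut S γ ≤ N * minOut T γ := by
  have product_inputs : ∀ A : Fin N → Matrix d d ℂ, (∀ i, IsDensity (A i)) →
      minOut S γ ≤ ∑ i, renyi (T (A i)) γ := fun A hA => by
    simpa [hST, renyi_tensorMatrix fun i => hT (hA i)] using
      minOut_le hS (IsDensity.tensorMatrix (d := fun _ : Fin N => d) hA) γ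
  rcases isEmpty_or_nonempty d with hd | hd
  · rw [minOut_of_isEmpty T, mul_zero]
    cases N with
    -- the empty family is a product input even though `d` carries no state
    | zero => simpa using product_inputs isEmptyElim isEmptyElim
    | succ N =>
      have : IsEmpty (Fin (N + 1) → d) := ⟨fun x => isEmptyElim (x 0)⟩
      rw [minOut_of_isEmpty]
  obtain ⟨ρ₀, hρ₀⟩ := exists_isDensity (n := d)
  calc minOut S γ ≤ sInf ((N : ℝ) • {x | ∃ ρ, IsDensity ρ ∧ x = renyi (T ρ) γ}) := by
        refine le_csInf ⟨_, Set.smul_mem_smul_set ⟨ρ₀, hρ₀, rfl⟩⟩ ?_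
        rintro _ ⟨_, ⟨ρ, hρ, rfl⟩, rfl⟩
        simpa using product_inputs (fun _ => ρ) fun _ => hρ
    _ = N * minOut T γ := Real.sInf_smul_of_nonneg (Nat.cast_nonneg N) _

end MinimalOutputEntropy

theorem minOut_additivity_transfer_general {d : Type*} [Fintype d] [DecidableEq d]
    (T : Matrix d d ℂ → Matrix d d ℂ) (hT : IsChannel T)
    (α β : ℝ) (hβα : β < α)
    (heq : minOut T α = minOut T β)
    (TN : ∀ N : ℕ, Matrix (Fin N → d) (Fin N → d) ℂ → Matrix (Fin N → d) (Fin N → d) ℂ)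
    (hTNchan : ∀ N, IsChannel (TN N))
    (hTNprod : ∀ (N : ℕ) (A : Fin N → Matrix d d ℂ),
      TN N (tensorMatrix (d := fun _ : Fin N => d) A) = tensorMatrix (fun i => T (A i)))
    (hadd : ∀ N : ℕ, minOut (TN N) α = N * minOut T α) :
    ∀ N : ℕ, minOut (TN N) β = N * minOut T β := by
  intro N
  have hTN := (hTNchan N).mapsTo_isDensity
  refine le_antisymm (minOut_le_mul_of_tensorMatrix hT.mapsTo_isDensity hTN (hTNprod N) β) ?_
  calc (N : ℝ) * minOut T β = minOut (TN N) α := by rw [← heq, hadd]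
    _ ≤ minOut (TN N) β := minOut_antitone hTN hβα.le

/-- additivity of the minimal output α-entropy implies additivity for the
β-entropy whenever `ν_α(T) = ν_β(T)` with `α > β ≥ 0`. -/
theorem minOut_additivity_transfer {d : Type*} [Fintype d] [DecidableEq d]
    (T : Matrix d d ℂ → Matrix d d ℂ) (hT : IsChannel T)
    (α β : ℝ) (hβ : 0 ≤ β) (hβα : β < α)
    (heq : minOut T α = minOut T β)
    (TN : ∀ N : ℕ, Matrix (Fin N → d) (Fin N → d) ℂ → Matrix (Fin N → d) (Fin N → d) ℂ)
    (hTNchan : ∀ N, IsChannel (TN N))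
    (hTNprod : ∀ (N : ℕ) (A : Fin N → Matrix d d ℂ),
      TN N (tensorMatrix (d := fun _ : Fin N => d) A) = tensorMatrix (fun i => T (A i)))
    (hadd : ∀ N : ℕ, minOut (TN N) α = N * minOut T α) :
    ∀ N : ℕ, minOut (TN N) β = N * minOut T β :=
  minOut_additivity_transfer_general T hT α β hβα heq TN hTNchan hTNprod hadd
end

section
/- Let M : S(ℂ^d) → S(ℂ^d) be a linear trace-preserving positive map such that some input state is mapped to a pure state, and define T(ρ) = (1_d − M(ρ))/(d−1). Then for all α > 0, the minimal output Renyi α-entropy of T equals log(d−1). -/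
open Matrix BigOperators
open scoped ComplexOrder

open scoped MatrixOrder

/-! A state `σ = M ρ` satisfies `0 ≤ σ ≤ 1`, so `(1 - σ) / (d - 1)` is a state whose
eigenvalues are at most `1 / (d - 1)`, and every Rényi entropy of such a spectrum is at least
`log (d - 1)`. If `σ` is a rank-one projection, `(1 - σ) / (d - 1)` has the flat spectrum
`{0, 1/(d-1), …, 1/(d-1)}`, on which every Rényi entropy equals `log (d - 1)`. -/

noncomputable section

section Spectral

variable {ι : Type*} [Fintype ι]

def spectralRenyi (μ : ι → ℝ) (α : ℝ) : ℝ :=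
  if α = 1 then -∑ i, μ i * Real.logb 2 (μ i)
  else (1 - α)⁻¹ * Real.logb 2 (∑ i, if μ i = 0 then 0 else μ i ^ α)

lemma mul_rpow_sub_one_le_of_lt_one {x c α : ℝ} (hx : 0 ≤ x) (hxc : x ≤ c) (hα : α < 1) :
    x * c ^ (α - 1) ≤ if x = 0 then 0 else x ^ α := by
  rcases hx.eq_or_lt with rfl | hx
  · simp
  calc x * c ^ (α - 1) ≤ x * x ^ (α - 1) :=
        mul_le_mul_of_nonneg_left (Real.rpow_le_rpow_of_nonpos hx hxc (by linarith)) hx.le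
    _ = _ := by rw [if_neg hx.ne', Real.rpow_sub_one hx.ne', mul_div_cancel₀ _ hx.ne']

lemma le_mul_rpow_sub_one_of_one_lt {x c α : ℝ} (hx : 0 ≤ x) (hxc : x ≤ c) (hα : 1 < α) :
    (if x = 0 then 0 else x ^ α) ≤ x * c ^ (α - 1) := by
  rcases hx.eq_or_lt with rfl | hx
  · simp
  calc (if x = 0 then 0 else x ^ α) = x * x ^ (α - 1) := by
        rw [if_neg hx.ne', Real.rpow_sub_one hx.ne', mul_div_cancel₀ _ hx.ne']
    _ ≤ x * c ^ (α - 1) :=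
        mul_le_mul_of_nonneg_left (Real.rpow_le_rpow hx.le hxc (by linarith)) hx.le

variable {μ : ι → ℝ} {c : ℝ}

lemma neg_logb_le_neg_sum_mul_logb (hμ : ∀ i, 0 ≤ μ i) (hsum : ∑ i, μ i = 1)
    (hle : ∀ i, μ i ≤ c) : -Real.logb 2 c ≤ -∑ i, μ i * Real.logb 2 (μ i) := by
  calc -Real.logb 2 c = -∑ i, μ i * Real.logb 2 c := by rw [← Finset.sum_mul, hsum, one_mul]
    _ ≤ -∑ i, μ i * Real.logb 2 (μ i) := by
      refine neg_le_neg (Finset.sum_le_sum fun i _ => ?_)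
      rcases (hμ i).eq_or_lt with h | h
      · simp [← h]
      · exact mul_le_mul_of_nonneg_left (Real.logb_le_logb_of_le one_lt_two h (hle i)) h.le

lemma neg_logb_le_spectralRenyi (hμ : ∀ i, 0 ≤ μ i) (hsum : ∑ i, μ i = 1)
    (hle : ∀ i, μ i ≤ c) (α : ℝ) : -Real.logb 2 c ≤ spectralRenyi μ α := by
  unfold spectralRenyi
  split_ifs with hα
  · exact neg_logb_le_neg_sum_mul_logb hμ hsum hle
  obtain ⟨i₀, -, hi₀⟩ : ∃ i ∈ Finset.univ, 0 < μ i :=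
    Finset.exists_lt_of_sum_lt (f := fun _ => 0) (by simp [hsum])
  have hc : 0 < c := hi₀.trans_le (hle i₀)
  set S := ∑ i, if μ i = 0 then 0 else μ i ^ α
  have hS : ∑ i, μ i * c ^ (α - 1) = c ^ (α - 1) := by rw [← Finset.sum_mul, hsum, one_mul]
  have hneg : -Real.logb 2 c = (1 - α)⁻¹ * Real.logb 2 (c ^ (α - 1)) := by
    have : (1 - α) ≠ 0 := sub_ne_zero.2 (Ne.symm hα)
    rw [Real.logb_rpow_eq_mul_logb_of_pos hc]
    field_simp
    ring
  rw [hneg]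
  rcases lt_or_gt_of_ne hα with hα | hα
  · have hcS : c ^ (α - 1) ≤ S := hS ▸ Finset.sum_le_sum fun i _ =>
      mul_rpow_sub_one_le_of_lt_one (hμ i) (hle i) hα
    exact mul_le_mul_of_nonneg_left
      (Real.logb_le_logb_of_le one_lt_two (Real.rpow_pos_of_pos hc _) hcS)
      (inv_nonneg.2 (by linarith))
  · have hSc : S ≤ c ^ (α - 1) := hS ▸ Finset.sum_le_sum fun i _ =>
      le_mul_rpow_sub_one_of_one_lt (hμ i) (hle i) hα
    have hSpos : 0 < S := by
      refine Finset.sum_pos' (fun i _ => ?_) ⟨i₀, Finset.mem_univ _, ?_⟩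
      · split_ifs
        exacts [le_rfl, Real.rpow_nonneg (hμ i) _]
      · rw [if_neg hi₀.ne']
        exact Real.rpow_pos_of_pos hi₀ _
    exact mul_le_mul_of_nonpos_left (Real.logb_le_logb_of_le one_lt_two hSpos hSc)
      (inv_nonpos.2 (by linarith))

lemma spectralRenyi_eq_neg_logb (hc : 0 < c) (hsum : ∑ i, μ i = 1)
    (hflat : ∀ i, μ i = 0 ∨ μ i = c) (α : ℝ) : spectralRenyi μ α = -Real.logb 2 c := by
  have hlog : ∀ i, μ i * Real.logb 2 (μ i) = μ i * Real.logb 2 c := fun i => by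
    rcases hflat i with h | h <;> simp [h]
  have hpow : ∀ i, (if μ i = 0 then 0 else μ i ^ α) = μ i * c ^ (α - 1) := fun i => by
    rcases hflat i with h | h
    · simp [h]
    · rw [h, if_neg hc.ne', Real.rpow_sub_one hc.ne', mul_div_cancel₀ _ hc.ne']
  unfold spectralRenyi
  split_ifs with hα
  · simp_rw [hlog, ← Finset.sum_mul, hsum, one_mul]
  · have : (1 - α) ≠ 0 := sub_ne_zero.2 (Ne.symm hα)
    simp_rw [hpow, ← Finset.sum_mul, hsum, one_mul, Real.logb_rpow_eq_mul_logb_of_pos hc]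
    field_simp
    ring

end Spectral

section MatrixLemmas

variable {n : Type*} [Fintype n] [DecidableEq n] {A B : Matrix n n ℂ}

lemma renyi_eq_spectralRenyi (hA : A.IsHermitian) (α : ℝ) :
    renyi A α = spectralRenyi hA.eigenvalues α := by
  simp only [renyi, vN, trPow, dif_pos hA, spectralRenyi]

namespace Matrix

lemma IsHermitian.sum_eigenvalues_eq_one (hA : A.IsHermitian) (htr : A.trace = 1) :
    ∑ i, hA.eigenvalues i = 1 := by
  have h := congrArg Complex.re hA.trace_eq_sum_eigenvalues
  simpa [htr] using h.symm

lemma IsHermitian.posSemidef_smul_one_sub_iff (hA : A.IsHermitian) (c : ℝ) :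
    (c • 1 - A).PosSemidef ↔ ∀ i, hA.eigenvalues i ≤ c := by
  rw [← Matrix.le_iff, ← Algebra.algebraMap_eq_smul_one,
    le_algebraMap_iff_spectrum_le hA.isSelfAdjoint, hA.spectrum_real_eq_range_eigenvalues]
  simp

lemma PosSemidef.posSemidef_one_sub_of_trace_eq_one (hB : B.PosSemidef) (htr : B.trace = 1) :
    (1 - B).PosSemidef := by
  simpa using (hB.isHermitian.posSemidef_smul_one_sub_iff 1).2 fun i =>
    hB.isHermitian.sum_eigenvalues_eq_one htr ▸
      Finset.single_le_sum (fun j _ => hB.eigenvalues_nonneg j) (Finset.mem_univ i)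

lemma IsHermitian.eigenvalues_eq_zero_or_eq_of_mul_self_eq_smul (hA : A.IsHermitian) {c : ℝ}
    (h : A * A = c • A) (i : n) : hA.eigenvalues i = 0 ∨ hA.eigenvalues i = c := by
  set v := ⇑(hA.eigenvectorBasis i)
  set l := hA.eigenvalues i
  have hv : v ≠ 0 := (WithLp.ofLp_eq_zero 2).ne.2 (hA.eigenvectorBasis.orthonormal.ne_zero i)
  have hAv : A *ᵥ v = l • v := hA.mulVec_eigenvectorBasis i
  have hsq : (l * l) • v = (c * l) • v := by
    calc (l * l) • v = A *ᵥ (A *ᵥ v) := by rw [hAv, mulVec_smul, hAv, smul_smul]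
      _ = (c * l) • v := by rw [mulVec_mulVec, h, smul_mulVec, hAv, smul_smul]
  rw [← sub_eq_zero, ← sub_smul, smul_eq_zero, or_iff_left hv, ← sub_mul, mul_eq_zero,
    sub_eq_zero] at hsq
  exact hsq.symm

end Matrix

omit [DecidableEq n] in
lemma IsProjection.posSemidef (hP : IsProjection B) : B.PosSemidef := by
  simpa [hP.1.eq, hP.2] using posSemidef_conjTranspose_mul_self B

end MatrixLemmas

section NormalizedComplement

variable {n : Type*} [Fintype n] [DecidableEq n] {B : Matrix n n ℂ}

def normalizedComplement (B : Matrix n n ℂ) : Matrix n n ℂ :=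
  ((Fintype.card n : ℂ) - 1)⁻¹ • (1 - B)

omit [DecidableEq n] in
lemma inv_card_sub_one_pos (hn : 2 ≤ Fintype.card n) : 0 < ((Fintype.card n : ℝ) - 1)⁻¹ := by
  rw [inv_pos, sub_pos]
  exact_mod_cast hn

lemma normalizedComplement_eq_real_smul (B : Matrix n n ℂ) :
    normalizedComplement B = ((Fintype.card n : ℝ) - 1)⁻¹ • (1 - B) := by
  rw [normalizedComplement, ← Complex.coe_smul]
  push_cast
  rfl

lemma normalizedComplement_posSemidef (hn : 2 ≤ Fintype.card n) (hB : B.PosSemidef)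
    (htr : B.trace = 1) : (normalizedComplement B).PosSemidef := by
  rw [normalizedComplement_eq_real_smul]
  exact (hB.posSemidef_one_sub_of_trace_eq_one htr).smul (inv_card_sub_one_pos hn).le

lemma trace_normalizedComplement (hn : 2 ≤ Fintype.card n) (htr : B.trace = 1) :
    (normalizedComplement B).trace = 1 := by
  have hne : (Fintype.card n : ℂ) - 1 ≠ 0 :=
    sub_ne_zero.2 (by exact_mod_cast (by omega : Fintype.card n ≠ 1))
  rw [normalizedComplement, trace_smul, trace_sub, trace_one, htr, smul_eq_mul,
    inv_mul_cancel₀ hne]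

lemma eigenvalues_normalizedComplement_le (hn : 2 ≤ Fintype.card n) (hB : B.PosSemidef)
    (hA : (normalizedComplement B).IsHermitian) (i : n) :
    hA.eigenvalues i ≤ ((Fintype.card n : ℝ) - 1)⁻¹ := by
  refine (hA.posSemidef_smul_one_sub_iff _).1 ?_ i
  rw [normalizedComplement_eq_real_smul, smul_sub, sub_sub_cancel]
  exact hB.smul (inv_card_sub_one_pos hn).le

lemma logb_card_sub_one_le_renyi_normalizedComplement (hn : 2 ≤ Fintype.card n)
    (hB : B.PosSemidef) (htr : B.trace = 1) (α : ℝ) :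
    Real.logb 2 ((Fintype.card n : ℝ) - 1) ≤ renyi (normalizedComplement B) α := by
  have hA := normalizedComplement_posSemidef hn hB htr
  rw [renyi_eq_spectralRenyi hA.isHermitian, ← neg_neg (Real.logb 2 _), ← Real.logb_inv]
  exact neg_logb_le_spectralRenyi hA.eigenvalues_nonneg
    (hA.isHermitian.sum_eigenvalues_eq_one (trace_normalizedComplement hn htr))
    (eigenvalues_normalizedComplement_le hn hB hA.isHermitian) α

lemma renyi_normalizedComplement_of_isProjection (hn : 2 ≤ Fintype.card n) (hP : IsProjection B)
    (htr : B.trace = 1) (α : ℝ) :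
    renyi (normalizedComplement B) α = Real.logb 2 ((Fintype.card n : ℝ) - 1) := by
  have hA := normalizedComplement_posSemidef hn hP.posSemidef htr
  have hsq : normalizedComplement B * normalizedComplement B =
      ((Fintype.card n : ℝ) - 1)⁻¹ • normalizedComplement B := by
    have hidem : (1 - B) * (1 - B) = 1 - B := by
      simp [sub_mul, mul_sub, hP.2]
    rw [normalizedComplement_eq_real_smul, smul_mul_smul_comm, hidem, smul_smul]
  rw [renyi_eq_spectralRenyi hA.isHermitian, spectralRenyi_eq_neg_logb (inv_card_sub_one_pos hn)
    (hA.isHermitian.sum_eigenvalues_eq_one (trace_normalizedComplement hn htr))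
    (hA.isHermitian.eigenvalues_eq_zero_or_eq_of_mul_self_eq_smul hsq), Real.logb_inv, neg_neg]

theorem minOut_normalizedComplement_comp {M : Matrix n n ℂ → Matrix n n ℂ}
    (hn : 2 ≤ Fintype.card n) (hTP : TracePreserving M) (hpos : PositiveMap M)
    {ρ₀ : Matrix n n ℂ} (hρ₀ : IsDensity ρ₀) (hP : IsProjection (M ρ₀)) (α : ℝ) :
    minOut (fun ρ => normalizedComplement (M ρ)) α =
      Real.logb 2 ((Fintype.card n : ℝ) - 1) := by
  have hρ₀out := renyi_normalizedComplement_of_isProjection hn hP ((hTP ρ₀).trans hρ₀.2) α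
  refine IsLeast.csInf_eq ⟨⟨ρ₀, hρ₀, hρ₀out.symm⟩, ?_⟩
  rintro _ ⟨ρ, hρ, rfl⟩
  exact logb_card_sub_one_le_renyi_normalizedComplement hn (hpos ρ hρ.1) ((hTP ρ).trans hρ.2) α

end NormalizedComplement

end

theorem minOut_generalized_WernerHolevo_general {d : ℕ} (hd : 2 ≤ d)
    (M : Matrix (Fin d) (Fin d) ℂ → Matrix (Fin d) (Fin d) ℂ)
    (hTP : TracePreserving M) (hpos : PositiveMap M)
    (hpure : ∃ ρ₀, IsDensity ρ₀ ∧ IsProjection (M ρ₀) ∧ (M ρ₀).rank = 1) :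
    ∀ α : ℝ, 0 < α →
      minOut (fun ρ => ((d : ℂ) - 1)⁻¹ • (1 - M ρ)) α = Real.logb 2 ((d : ℝ) - 1) := by
  intro α _
  obtain ⟨ρ₀, hρ₀, hP, -⟩ := hpure
  simpa [normalizedComplement] using
    minOut_normalizedComplement_comp (by simpa using hd) hTP hpos hρ₀ hP α

/-- for `T(ρ) = (1 - M(ρ))/(d-1)` with `M` positive trace-preserving mapping
some state to a pure state, the minimal output α-entropy is `log (d-1)` for all `α > 0`. -/
theorem minOut_generalized_WernerHolevo {d : ℕ} (hd : 2 ≤ d)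
    (M : Matrix (Fin d) (Fin d) ℂ → Matrix (Fin d) (Fin d) ℂ)
    (hlin : IsLinearMap ℂ M) (hTP : TracePreserving M) (hpos : PositiveMap M)
    (hpure : ∃ ρ₀, IsDensity ρ₀ ∧ IsProjection (M ρ₀) ∧ (M ρ₀).rank = 1) :
    ∀ α : ℝ, 0 < α →
      minOut (fun ρ => ((d : ℂ) - 1)⁻¹ • (1 - M ρ)) α = Real.logb 2 ((d : ℝ) - 1) :=
  minOut_generalized_WernerHolevo_general hd M hTP hpos hpure
end

section
/- The extreme points of the convex set C = {r : r positive semidefinite on ℂ^d, tr r = m, r ≤ 1_d} (with m a positive integer, m ≤ d) are exactly the orthogonal projections of rank m. -/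
open Matrix BigOperators
open scoped ComplexOrder

/-!
Write `r = U diag(λ) U*` with `U` unitary. Membership of `r` in the set translates into `λ` lying
in the hypersimplex `{0 ≤ λ ≤ 1, ∑ λ = m}`, and `λ ↦ U diag(λ) U*` is linear and injective, so
extremality of `r` passes to `λ`. An extreme point of the hypersimplex has no two coordinates in
`(0, 1)` (shift mass `ε` from one to the other and back), and since `∑ λ` is an integer it cannot
have exactly one either; so `λ` is a `0/1` vector, `r` is a projection, and its rank is its trace
`m`. Conversely, projections are extreme already in the operator interval `0 ≤ x ≤ 1`, hence in
the slice `tr x = m` of it.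
-/

open Set

theorem AddSubgroup.exists_ne_notMem_of_sum_mem {G ι : Type*} [AddCommGroup G] [Fintype ι]
    [DecidableEq ι] (S : AddSubgroup G) {f : ι → G} (hsum : ∑ j, f j ∈ S) {i : ι}
    (hi : f i ∉ S) : ∃ j ≠ i, f j ∉ S := by
  by_contra! hrest
  refine hi ?_
  rw [← Finset.add_sum_erase _ f (Finset.mem_univ i)] at hsum
  have hother : ∑ j ∈ Finset.univ.erase i, f j ∈ S :=
    S.sum_mem fun j hj => hrest j (Finset.ne_of_mem_erase hj)
  simpa using S.sub_mem hsum hother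

theorem Matrix.trace_eq_rank_of_isIdempotentElem {K n : Type*} [Field K] [Fintype n]
    [DecidableEq n] {P : Matrix n n K} (hP : IsIdempotentElem P) : P.trace = P.rank := by
  have hP' : IsIdempotentElem (toLin' P) := hP.map (toLinAlgEquiv' (R := K) (n := n))
  rw [← trace_toLin'_eq, ((LinearMap.isProj_range_iff_isIdempotentElem _).mpr hP').trace]
  rfl

theorem mem_extremePoints_preimage_of_injective {𝕜 E F : Type*} [Ring 𝕜] [PartialOrder 𝕜]
    [IsOrderedRing 𝕜] [AddCommGroup E] [Module 𝕜 E] [AddCommGroup F] [Module 𝕜 F]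
    (L : E →ₗ[𝕜] F) (hL : Function.Injective L) {A : Set F} {x : E}
    (hx : L x ∈ A.extremePoints 𝕜) : x ∈ (L ⁻¹' A).extremePoints 𝕜 := by
  refine ⟨hx.1, fun y₁ hy₁ y₂ hy₂ hseg => hL (hx.2 hy₁ hy₂ ?_)⟩
  exact image_openSegment 𝕜 L.toAffineMap y₁ y₂ ▸ mem_image_of_mem L hseg

def hypersimplex (n : Type*) [Fintype n] (c : ℝ) : Set (n → ℝ) :=
  {f | f ∈ Icc 0 1 ∧ ∑ i, f i = c}

section Hypersimplex

variable {n : Type*} [Fintype n] [DecidableEq n] {c : ℝ} {f : n → ℝ} {i j : n}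

theorem add_single_sub_single_mem_hypersimplex (hf : f ∈ hypersimplex n c) (hij : i ≠ j)
    {δ : ℝ} (hi : f i + δ ∈ Icc 0 1) (hj : f j - δ ∈ Icc 0 1) :
    f + Pi.single i δ - Pi.single j δ ∈ hypersimplex n c := by
  have hcoord : ∀ k, (f + Pi.single i δ - Pi.single j δ : n → ℝ) k ∈ Icc 0 1 := by
    intro k
    rcases eq_or_ne k i with rfl | hki
    · simpa [hij] using hi
    rcases eq_or_ne k j with rfl | hkj
    · simpa [hki] using hj
    simpa [hki, hkj] using ⟨hf.1.1 k, hf.1.2 k⟩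
  refine ⟨⟨fun k => (hcoord k).1, fun k => (hcoord k).2⟩, ?_⟩
  simp [Finset.sum_add_distrib, Finset.sum_sub_distrib, hf.2]

theorem notMem_extremePoints_hypersimplex_of_mem_Ioo (hij : i ≠ j) (hi : f i ∈ Ioo 0 1)
    (hj : f j ∈ Ioo 0 1) : f ∉ (hypersimplex n c).extremePoints ℝ := by
  intro hf
  set ε := min (min (f i) (1 - f i)) (min (f j) (1 - f j))
  have hε : 0 < ε := by
    simp only [ε, lt_min_iff, sub_pos]
    exact ⟨⟨hi.1, hi.2⟩, hj.1, hj.2⟩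
  have hεi : ε ≤ f i ∧ ε ≤ 1 - f i :=
    ⟨(min_le_left _ _).trans (min_le_left _ _), (min_le_left _ _).trans (min_le_right _ _)⟩
  have hεj : ε ≤ f j ∧ ε ≤ 1 - f j :=
    ⟨(min_le_right _ _).trans (min_le_left _ _), (min_le_right _ _).trans (min_le_right _ _)⟩
  have hplus := add_single_sub_single_mem_hypersimplex hf.1 hij (δ := ε)
    ⟨by linarith, by linarith⟩ ⟨by linarith, by linarith⟩
  have hminus := add_single_sub_single_mem_hypersimplex hf.1 hij (δ := -ε)
    ⟨by linarith, by linarith⟩ ⟨by linarith, by linarith⟩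
  have hmid : f ∈ openSegment ℝ (f + Pi.single i ε - Pi.single j ε)
      (f + Pi.single i (-ε) - Pi.single j (-ε)) := by
    refine ⟨1 / 2, 1 / 2, by norm_num, by norm_num, by norm_num, ?_⟩
    ext k
    simp only [Pi.add_apply, Pi.sub_apply, Pi.smul_apply, smul_eq_mul, Pi.single_apply]
    split_ifs <;> ring
  have hi' := congrFun (hf.2 hplus hminus hmid) i
  simp [hij] at hi'
  exact hε.ne' hi'

theorem eq_zero_or_eq_one_of_mem_extremePoints_hypersimplex {m : ℕ}
    (hf : f ∈ (hypersimplex n m).extremePoints ℝ) (i : n) : f i = 0 ∨ f i = 1 := by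
  set S := (Int.castAddHom ℝ).range
  have hfrac : ∀ k, f k ∉ S ↔ f k ∈ Ioo 0 1 := by
    intro k
    obtain ⟨h0, h1⟩ : f k ∈ Icc 0 1 := ⟨hf.1.1.1 k, hf.1.1.2 k⟩
    constructor
    · intro hk
      exact ⟨h0.lt_of_ne fun h => hk ⟨0, by simp [h]⟩, h1.lt_of_ne fun h => hk ⟨1, by simp [h]⟩⟩
    · rintro ⟨h0, h1⟩ ⟨z, hz⟩
      simp only [Int.coe_castAddHom] at hz
      rw [← hz] at h0 h1
      have : (0 : ℤ) < z := by exact_mod_cast h0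
      have : z < 1 := by exact_mod_cast h1
      omega
  by_contra! h
  have hi : f i ∈ Ioo 0 1 := ⟨(hf.1.1.1 i).lt_of_ne h.1.symm, (hf.1.1.2 i).lt_of_ne h.2⟩
  obtain ⟨j, hji, hj⟩ := S.exists_ne_notMem_of_sum_mem ⟨m, by simp [hf.1.2]⟩ ((hfrac i).mpr hi)
  exact notMem_extremePoints_hypersimplex_of_mem_Ioo hji.symm hi ((hfrac j).mp hj) hf

end Hypersimplex

namespace Matrix

variable {n : Type*} [Fintype n] [DecidableEq n]

noncomputable def conjDiagonal (U : unitaryGroup n ℂ) : (n → ℝ) →ₐ[ℝ] Matrix n n ℂ :=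
  ((Unitary.conjStarAlgAut ℝ _ U).toAlgEquiv : Matrix n n ℂ →ₐ[ℝ] Matrix n n ℂ).comp
    ((diagonalAlgHom ℝ).comp (Complex.ofRealAm.compLeft n))

theorem conjDiagonal_apply (U : unitaryGroup n ℂ) (f : n → ℝ) :
    conjDiagonal U f = U * diagonal (fun i => (f i : ℂ)) * star (U : Matrix n n ℂ) :=
  rfl

theorem conjDiagonal_injective (U : unitaryGroup n ℂ) : Function.Injective (conjDiagonal U) :=
  (Unitary.conjStarAlgAut ℝ _ U).injective.comp <| diagonal_injective.comp <|
    fun _ _ h => funext fun i => Complex.ofReal_injective (congrFun h i)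

theorem posSemidef_conjDiagonal_iff (U : unitaryGroup n ℂ) (f : n → ℝ) :
    (conjDiagonal U f).PosSemidef ↔ 0 ≤ f := by
  simp [conjDiagonal_apply, Unitary.isUnit_coe.posSemidef_star_right_conjugate_iff, Pi.le_def]

theorem trace_conjDiagonal (U : unitaryGroup n ℂ) (f : n → ℝ) :
    (conjDiagonal U f).trace = ((∑ i, f i : ℝ) : ℂ) := by
  simp [conjDiagonal_apply, trace_mul_cycle (U : Matrix n n ℂ)]

theorem preimage_conjDiagonal (U : unitaryGroup n ℂ) (c : ℝ) :
    conjDiagonal U ⁻¹' {r | r.PosSemidef ∧ r.trace = (c : ℂ) ∧ (1 - r).PosSemidef}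
      = hypersimplex n c := by
  ext f
  have hsub : 1 - conjDiagonal U f = conjDiagonal U (1 - f) := by rw [map_sub, map_one]
  simp only [mem_preimage, mem_ofPred_eq, hsub, posSemidef_conjDiagonal_iff, trace_conjDiagonal,
    Complex.ofReal_inj, sub_nonneg]
  exact ⟨fun ⟨h0, hc, h1⟩ => ⟨⟨h0, h1⟩, hc⟩, fun ⟨⟨h0, h1⟩, hc⟩ => ⟨h0, hc, h1⟩⟩

theorem IsHermitian.eq_conjDiagonal {A : Matrix n n ℂ} (hA : A.IsHermitian) :
    A = conjDiagonal hA.eigenvectorUnitary hA.eigenvalues :=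
  hA.spectral_theorem

theorem isProjection_of_mem_extremePoints {m : ℕ} {r : Matrix n n ℂ}
    (hr : r ∈ extremePoints ℝ {r : Matrix n n ℂ |
      r.PosSemidef ∧ r.trace = (m : ℂ) ∧ (1 - r).PosSemidef}) :
    IsProjection r := by
  have hH : r.IsHermitian := hr.1.1.isHermitian
  have hspec := hH.eq_conjDiagonal
  set U := hH.eigenvectorUnitary
  set eig := hH.eigenvalues
  have heig : eig ∈ (hypersimplex n m).extremePoints ℝ := by
    rw [← preimage_conjDiagonal U, Complex.ofReal_natCast]
    exact mem_extremePoints_preimage_of_injective (conjDiagonal U).toLinearMap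
      (conjDiagonal_injective U) (hspec ▸ hr)
  have hidem : eig * eig = eig := funext fun i => by
    rcases eq_zero_or_eq_one_of_mem_extremePoints_hypersimplex heig i with h | h <;> simp [h]
  exact ⟨hH, by rw [hspec, ← map_mul, hidem]⟩

end Matrix

-- With the operator norm, `Matrix n n ℂ` is a C⋆-algebra and `0 ≤ x ≤ 1` is the positive part of
-- its unit ball.
section
open scoped MatrixOrder Matrix.Norms.L2Operator

variable {n : Type*} [Fintype n] [DecidableEq n]

theorem Matrix.setOf_posSemidef_and_one_sub_posSemidef_eq :
    {x : Matrix n n ℂ | x.PosSemidef ∧ (1 - x).PosSemidef}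
      = {x | 0 ≤ x} ∩ Metric.closedBall 0 1 := by
  ext x
  simp only [mem_ofPred_eq, mem_inter_iff, mem_closedBall_zero_iff]
  exact ⟨fun ⟨h0, h1⟩ => ⟨h0.nonneg, (CStarAlgebra.norm_le_one_iff_of_nonneg x h0.nonneg).mpr h1⟩,
    fun ⟨h0, h1⟩ => ⟨h0.posSemidef, (CStarAlgebra.norm_le_one_iff_of_nonneg x h0).mp h1⟩⟩

theorem IsProjection.mem_extremePoints {P : Matrix n n ℂ} (hP : IsProjection P) :
    P ∈ extremePoints ℝ {x : Matrix n n ℂ | x.PosSemidef ∧ (1 - x).PosSemidef} := by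
  rw [setOf_posSemidef_and_one_sub_posSemidef_eq]
  exact isStarProjection_iff_mem_extremePoints_setOfPred_nonneg_inter_unitClosedBall.mp
    ⟨hP.2, hP.1⟩

end

theorem extremePoints_trace_m_contraction_general {d m : ℕ} :
    Set.extremePoints ℝ
        {r : Matrix (Fin d) (Fin d) ℂ |
          r.PosSemidef ∧ r.trace = (m : ℂ) ∧ (1 - r).PosSemidef}
      = {r : Matrix (Fin d) (Fin d) ℂ | IsProjection r ∧ r.rank = m} := by
  ext r
  constructor
  · intro hr
    have hP := isProjection_of_mem_extremePoints hr
    exact ⟨hP, by exact_mod_cast (trace_eq_rank_of_isIdempotentElem hP.2).symm.trans hr.1.2.1⟩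
  · rintro ⟨hP, hrank⟩
    have hext := hP.mem_extremePoints
    have htrace : r.trace = m := by rw [trace_eq_rank_of_isIdempotentElem hP.2, hrank]
    refine inter_extremePoints_subset_extremePoints_of_subset ?_
      ⟨⟨hext.1.1, htrace, hext.1.2⟩, hext⟩
    exact fun x hx => ⟨hx.1, hx.2.2⟩

/-- the extreme points of `{r : 0 ≤ r ≤ 1, tr r = m}` are exactly the
rank-`m` orthogonal projections. -/
theorem extremePoints_trace_m_contraction {d m : ℕ} (hm : 1 ≤ m) (hmd : m ≤ d) :
    Set.extremePoints ℝ
        {r : Matrix (Fin d) (Fin d) ℂ |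
          r.PosSemidef ∧ r.trace = (m : ℂ) ∧ (1 - r).PosSemidef}
      = {r : Matrix (Fin d) (Fin d) ℂ | IsProjection r ∧ r.rank = m} :=
  extremePoints_trace_m_contraction_general
end

section
/- Let M(ρ) = ρ_n^T ⊗ 1_D/D on ℂ^d = ℂ^n ⊗ ℂ^D (where ρ_n is the reduction to the first factor) and T(ρ) = (1_d − D·M(ρ))/(d − D) with d = nD, n > 1. Then T is completely positive, i.e., (T⊗id)(Ω) = (1_{d²}/d − F_n⊗1_{D²}/d)/(d−D) ≥ 0 where Ω is the maximally entangled state, but the partial transpose of (T⊗id)(Ω) is not positive semidefinite, so T is not entanglement-breaking. -/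
open Matrix BigOperators
open scoped ComplexOrder

/-! The Choi matrix `(T ⊗ id)(Ω)` is a positive multiple of `1 - F`, where `F` is the flip of the
two `ℂⁿ` factors (tensored with the identity on `ℂ^D ⊗ ℂ^D`). Since `F` is a self-inverse
permutation matrix, `1 - F = (1 - F)ᴴ (1 - F) / 2 ≥ 0`. The partial transpose of `F_n` is `n`
times the projection onto the maximally entangled vector, so that vector (tensored with a fixed
basis vector of `ℂ^D ⊗ ℂ^D`) is an eigenvector of the partial transpose of `1 - F` with the
negative eigenvalue `1 - n`. -/

theorem posSemidef_one_sub_permMatrix_of_mul_self_eq_one {m 𝕜 : Type*} [Fintype m]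
    [DecidableEq m] [RCLike 𝕜] {σ : Equiv.Perm m} (hσ : σ * σ = 1) :
    (1 - σ.permMatrix 𝕜).PosSemidef := by
  set P := σ.permMatrix 𝕜
  have hPH : Pᴴ = P := by rw [conjTranspose_permMatrix, inv_eq_of_mul_eq_one_left hσ]
  have hPP : P * P = 1 := by rw [← permMatrix_mul, hσ, permMatrix_one]
  have hsq : (1 - P)ᴴ * (1 - P) = (2 : 𝕜) • (1 - P) := by
    rw [conjTranspose_sub, conjTranspose_one, hPH, sub_mul, mul_sub, mul_sub, hPP, Matrix.one_mul,
      Matrix.mul_one, Matrix.one_mul, two_smul]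
    abel
  have hhalf : 1 - P = (2 : 𝕜)⁻¹ • ((1 - P)ᴴ * (1 - P)) := by
    rw [hsq, smul_smul, inv_mul_cancel₀ two_ne_zero, one_smul]
  rw [hhalf]
  exact (posSemidef_conjTranspose_mul_self _).smul (by simp)

theorem not_posSemidef_of_mulVec_eq_smul {m 𝕜 : Type*} [Fintype m] [RCLike 𝕜]
    {A : Matrix m m 𝕜} {x : m → 𝕜} {μ : 𝕜} (hx : x ≠ 0) (hμ : μ < 0) (hAx : A *ᵥ x = μ • x) :
    ¬ A.PosSemidef := by
  intro hA
  have h := hA.dotProduct_mulVec_nonneg x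
  rw [hAx, dotProduct_smul, smul_eq_mul] at h
  exact (mul_neg_of_neg_of_pos hμ (dotProduct_star_self_pos_iff.mpr hx)).not_ge h

def swapFst (α β : Type*) : Equiv.Perm ((α × β) × (α × β)) :=
  Function.Involutive.toPerm (fun p => ((p.2.1, p.1.2), (p.1.1, p.2.2))) fun _ => rfl

@[simp]
theorem swapFst_apply {α β : Type*} (p : (α × β) × (α × β)) :
    swapFst α β p = ((p.2.1, p.1.2), (p.1.1, p.2.2)) := rfl

theorem swapFst_mul_self (α β : Type*) : swapFst α β * swapFst α β = 1 := by
  ext p <;> rfl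

theorem permMatrix_swapFst_apply {α β : Type*} [DecidableEq α] [DecidableEq β]
    (p q : (α × β) × (α × β)) :
    (swapFst α β).permMatrix ℂ p q =
      if p.1.1 = q.2.1 ∧ p.2.1 = q.1.1 ∧ p.1.2 = q.1.2 ∧ p.2.2 = q.2.2 then 1 else 0 := by
  simp only [PEquiv.toMatrix_apply, Equiv.toPEquiv_apply, Option.mem_def, Option.some.injEq,
    swapFst_apply, Prod.ext_iff]
  exact if_congr (by tauto) rfl rfl

theorem pt2_smul {a b : Type*} (c : ℂ) (X : Matrix (a × b) (a × b) ℂ) :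
    pt2 (c • X) = c • pt2 X := rfl

def entangledWitness (α : Type*) {β : Type*} [DecidableEq α] [DecidableEq β] (z : β) :
    (α × β) × (α × β) → ℂ :=
  fun p => if p.1.1 = p.2.1 ∧ p.1.2 = z ∧ p.2.2 = z then 1 else 0

theorem entangledWitness_ne_zero {α β : Type*} [DecidableEq α] [DecidableEq β] [Nonempty α]
    (z : β) : entangledWitness α z ≠ 0 := by
  obtain ⟨a⟩ := ‹Nonempty α›
  intro h
  simpa [entangledWitness] using congr_fun h ((a, z), (a, z))

theorem pt2_one_sub_permMatrix_swapFst_mulVec {α β : Type*} [Fintype α] [DecidableEq α]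
    [Fintype β] [DecidableEq β] (z : β) :
    pt2 (1 - (swapFst α β).permMatrix ℂ) *ᵥ entangledWitness α z =
      (1 - Fintype.card α : ℂ) • entangledWitness α z := by
  ext ⟨⟨a, i⟩, b, j⟩
  simp [entangledWitness, mulVec, dotProduct, pt2, Matrix.sub_apply, one_apply,
    Fintype.sum_prod_type, ite_and]
  by_cases hi : i = z <;> by_cases hab : a = b <;> by_cases hj : j = z <;>
    simp [hi, hab, hj, Ne.symm]

theorem ampl_apply_of_maxEntangled {m : Type*} [Fintype m] [DecidableEq m]
    (T : Matrix m m ℂ → Matrix m m ℂ) (c : ℂ) (x y x' y' : m) :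
    ampl T (of fun p q => if p.1 = p.2 ∧ q.1 = q.2 then c else 0) (x, y) (x', y') =
      T (single y y' c) x x' := by
  simp only [ampl, of_apply]
  congr 2
  ext a b
  simp [single_apply, eq_comm]

section CoarseGraining

variable {n D : ℕ}

/-- `M(ρ) = ρₙᵀ ⊗ 1_D / D`, where `ρₙ` is the marginal of `ρ` on `ℂⁿ`. -/
noncomputable def transposedMarginal (ρ : Matrix (Fin n × Fin D) (Fin n × Fin D) ℂ) :
    Matrix (Fin n × Fin D) (Fin n × Fin D) ℂ :=
  of fun p q => (∑ k : Fin D, ρ (q.1, k) (p.1, k)) * (if p.2 = q.2 then (D : ℂ)⁻¹ else 0)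

noncomputable def coarseGraining (X : Matrix (Fin n × Fin D) (Fin n × Fin D) ℂ) :
    Matrix (Fin n × Fin D) (Fin n × Fin D) ℂ :=
  ((n * D : ℂ) - (D : ℂ))⁻¹ • (X.trace • 1 - (D : ℂ) • transposedMarginal X)

theorem coarseGraining_single_apply (hD : 1 ≤ D) (y y' p q : Fin n × Fin D) (c : ℂ) :
    coarseGraining (single y y' c) p q = ((n * D : ℂ) - D)⁻¹ *
      ((if y = y' ∧ p = q then c else 0) -
        if p.1 = y'.1 ∧ q.1 = y.1 ∧ p.2 = q.2 ∧ y.2 = y'.2 then c else 0) := by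
  have hD0 : (D : ℂ) ≠ 0 := Nat.cast_ne_zero.mpr (by omega)
  have hc : (D : ℂ) * (c * (D : ℂ)⁻¹) = c := by field_simp
  rcases eq_or_ne y y' with rfl | hyy'
  · simp [coarseGraining, transposedMarginal, single_apply, Prod.ext_iff, ite_and, hc, one_apply]
    left
    split_ifs <;> grind
  · simp [coarseGraining, transposedMarginal, single_apply, Prod.ext_iff, ite_and, hc, hyy']
    split_ifs <;> grind

theorem ampl_coarseGraining_maxEntangled (hD : 1 ≤ D) :
    ampl coarseGraining (of fun p q => if p.1 = p.2 ∧ q.1 = q.2 then ((n * D : ℂ))⁻¹ else 0) =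
      ((n * D : ℂ) - D)⁻¹ •
        (((n * D : ℂ))⁻¹ • 1 - ((n * D : ℂ))⁻¹ • (swapFst (Fin n) (Fin D)).permMatrix ℂ) := by
  ext ⟨x, y⟩ ⟨x', y'⟩
  rw [ampl_apply_of_maxEntangled, coarseGraining_single_apply hD]
  simp only [Matrix.smul_apply, Matrix.sub_apply, smul_eq_mul, one_apply, permMatrix_swapFst_apply,
    Prod.ext_iff, mul_ite, mul_one, mul_zero]
  congr 2
  · exact if_congr (by tauto) rfl rfl
  · exact if_congr (by tauto) rfl rfl

theorem coarseGraining_scale_pos (hn : 1 < n) (hD : 1 ≤ D) :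
    (0 : ℂ) < ((n * D : ℂ) - D)⁻¹ * ((n * D : ℂ))⁻¹ := by
  have hcast : ((n * D : ℂ) - D)⁻¹ * ((n * D : ℂ))⁻¹ =
      (((n * D - D : ℝ))⁻¹ * ((n * D : ℝ))⁻¹ : ℝ) := by
    push_cast
    ring
  have hn' : (1 : ℝ) < n := by exact_mod_cast hn
  have hD' : (1 : ℝ) ≤ D := by exact_mod_cast hD
  rw [hcast, Complex.zero_lt_real]
  apply mul_pos <;> apply inv_pos.mpr <;> nlinarith

end CoarseGraining

/-- the coarse-graining channel `T(ρ) = (1 - D·(ρ_n^T ⊗ 1_D/D))/(d - D)`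
on `ℂ^d = ℂ^n ⊗ ℂ^D` is completely positive on the maximally entangled state, with
`(T⊗id)(Ω) = (1/d - F_n⊗1/d)/(d-D) ≥ 0`, but `(T⊗id)(Ω)` does not have positive partial
transpose, so `T` is not entanglement-breaking. -/
theorem coarseGraining_cp_not_entanglement_breaking {n D : ℕ} (hn : 1 < n) (hD : 1 ≤ D)
    (M T : Matrix (Fin n × Fin D) (Fin n × Fin D) ℂ →
      Matrix (Fin n × Fin D) (Fin n × Fin D) ℂ)
    (hM : ∀ ρ, M ρ = Matrix.of fun p q : Fin n × Fin D =>
      (∑ k : Fin D, ρ (q.1, k) (p.1, k)) * (if p.2 = q.2 then (D : ℂ)⁻¹ else 0))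
    (hT : ∀ X, T X = ((n * D : ℂ) - (D : ℂ))⁻¹ • (X.trace • 1 - (D : ℂ) • M X))
    (Ω Fbig : Matrix ((Fin n × Fin D) × (Fin n × Fin D))
      ((Fin n × Fin D) × (Fin n × Fin D)) ℂ)
    (hΩ : Ω = Matrix.of fun p q =>
      if p.1 = p.2 ∧ q.1 = q.2 then ((n * D : ℂ))⁻¹ else 0)
    (hF : Fbig = Matrix.of fun p q =>
      if p.1.1 = q.2.1 ∧ p.2.1 = q.1.1 ∧ p.1.2 = q.1.2 ∧ p.2.2 = q.2.2
        then (1 : ℂ) else 0) :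
    ampl T Ω = ((n * D : ℂ) - (D : ℂ))⁻¹ •
        (((n * D : ℂ))⁻¹ • 1 - ((n * D : ℂ))⁻¹ • Fbig) ∧
    (ampl T Ω).PosSemidef ∧
    ¬ (pt2 (ampl T Ω)).PosSemidef := by
  obtain rfl : M = transposedMarginal := funext hM
  obtain rfl : T = coarseGraining := funext hT
  obtain rfl : Fbig = (swapFst (Fin n) (Fin D)).permMatrix ℂ := by
    rw [hF]
    exact Matrix.ext fun p q => (permMatrix_swapFst_apply p q).symm
  have hchoi := hΩ ▸ ampl_coarseGraining_maxEntangled hD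
  set c : ℂ := ((n * D : ℂ) - D)⁻¹ * ((n * D : ℂ))⁻¹
  have hc : 0 < c := coarseGraining_scale_pos hn hD
  have hscaled : ampl coarseGraining Ω = c • (1 - (swapFst (Fin n) (Fin D)).permMatrix ℂ) := by
    rw [hchoi, ← smul_sub, smul_smul]
  refine ⟨hchoi, ?_, ?_⟩
  · rw [hscaled]
    exact (posSemidef_one_sub_permMatrix_of_mul_self_eq_one (swapFst_mul_self _ _)).smul hc.le
  · have : NeZero D := ⟨by omega⟩
    have : Nonempty (Fin n) := ⟨⟨0, by omega⟩⟩
    refine not_posSemidef_of_mulVec_eq_smul (entangledWitness_ne_zero 0)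
      (mul_neg_of_pos_of_neg hc (sub_neg.mpr (Nat.one_lt_cast.mpr hn))) ?_
    rw [hscaled, pt2_smul, Matrix.smul_mulVec, pt2_one_sub_permMatrix_swapFst_mulVec,
      Fintype.card_fin, smul_smul]
end
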